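/- arXiv:2402.14478 — 2 statements merged into one kernel-verified Lean document; each statement's English description precedes it below -/
import Mathlib

section
/- Let f be analytic and 2π-periodic on the strip {θ : |Im θ| < s} with sup-norm |f|_s. Then for the truncation T_K f = Σ_{|k| ≤ K} f_k e^{i⟨k,θ⟩} and any 0 < σ ≤ s with Kσ ≥ n, one has |f − T_K f|_{s−σ} ≤ c K^n e^{−Kσ} |f|_s, where c is a constant depending only on n. -/
/-!
On the strip `|Im θ| ≤ s - σ` the `k`-th tail term is at most `M e^{-|k|σ}`. Splitting
`σ = τ + (σ - τ)` with `τ = n / K ≤ σ` and using `|k| > K` bounds it by `M e^n e^{-Kσ} e^{-|k|τ}`.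
The weights `e^{-|k|τ}` factor over the coordinates, so all their finite sums are at most
`(∑_{j ∈ ℤ} e^{-|j|τ})^n = ((1 + e^{-τ}) / (1 - e^{-τ}))^n ≤ (1 + 2/τ)^n ≤ (3K)^n`.
-/

open Real Finset

lemma norm_tsum_le_of_norm_le_of_sum_le {ι E : Type*} [SeminormedAddCommGroup E] {f : ι → E}
    {g : ι → ℝ} {B : ℝ} (hfg : ∀ i, ‖f i‖ ≤ g i) (hgB : ∀ t : Finset ι, ∑ i ∈ t, g i ≤ B) :
    ‖∑' i, f i‖ ≤ B := by
  have hg : Summable g := summable_of_sum_le (fun i => (norm_nonneg _).trans (hfg i)) hgB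
  exact (tsum_of_norm_bounded hg.hasSum hfg).trans (hg.tsum_le_of_sum_le hgB)

lemma sum_prod_apply_le_pow {ι α : Type*} [Fintype ι] {f : α → ℝ} (hf : ∀ a, 0 ≤ f a) {B : ℝ}
    (hB : ∀ t : Finset α, ∑ a ∈ t, f a ≤ B) (S : Finset (ι → α)) :
    ∑ k ∈ S, ∏ i, f (k i) ≤ B ^ Fintype.card ι := by
  classical
  calc ∑ k ∈ S, ∏ i, f (k i)
      ≤ ∑ k ∈ Fintype.piFinset fun i => S.image (· i), ∏ i, f (k i) :=
        sum_le_sum_of_subset_of_nonneg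
          (fun k hk => Fintype.mem_piFinset.2 fun i => mem_image_of_mem _ hk)
          (fun k _ _ => prod_nonneg fun i _ => hf _)
    _ = ∏ i, ∑ a ∈ S.image (· i), f a := (prod_univ_sum _ _).symm
    _ ≤ ∏ _i : ι, B := prod_le_prod (fun i _ => sum_nonneg fun a _ => hf a) (fun i _ => hB _)
    _ = B ^ Fintype.card ι := by rw [prod_const, card_univ]

lemma hasSum_pow_natAbs {r : ℝ} (hr₀ : 0 ≤ r) (hr₁ : r < 1) :
    HasSum (fun j : ℤ => r ^ j.natAbs) ((1 + r) / (1 - r)) := by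
  have hpos : HasSum (fun m : ℕ => r ^ m) (1 - r)⁻¹ := hasSum_geometric_of_lt_one hr₀ hr₁
  have hneg : HasSum (fun m : ℕ => r ^ (m + 1)) (r * (1 - r)⁻¹) := by
    simpa only [pow_succ'] using hpos.mul_left r
  convert HasSum.of_nat_of_neg_add_one (f := fun j : ℤ => r ^ j.natAbs) (by simpa using hpos)
    (hneg.congr_fun fun m => by congr 1) using 1
  field_simp [(sub_pos.2 hr₁).ne']

lemma one_add_exp_neg_div_one_sub_exp_neg_le {τ : ℝ} (hτ : 0 < τ) :
    (1 + exp (-τ)) / (1 - exp (-τ)) ≤ 1 + 2 / τ := by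
  have hlt : exp (-τ) < 1 := exp_lt_one_iff.2 (neg_lt_zero.2 hτ)
  have hkey : exp (-τ) * (τ + 1) ≤ 1 := by
    have := add_one_le_exp τ
    have h1 : exp (-τ) * exp τ = 1 := by rw [← exp_add, neg_add_cancel, exp_zero]
    nlinarith [exp_pos (-τ)]
  rw [div_le_iff₀ (sub_pos.2 hlt)]
  field_simp
  nlinarith

lemma sum_exp_neg_mul_sum_abs_le {ι : Type*} [Fintype ι] {τ : ℝ} (hτ : 0 < τ)
    (S : Finset (ι → ℤ)) :
    ∑ k ∈ S, exp (-(τ * ((∑ i, |k i| : ℤ) : ℝ))) ≤ (1 + 2 / τ) ^ Fintype.card ι := by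
  have hprod : ∀ k : ι → ℤ,
      exp (-(τ * ((∑ i, |k i| : ℤ) : ℝ))) = ∏ i, exp (-τ) ^ (k i).natAbs := by
    intro k
    simp only [← exp_nat_mul, ← exp_sum, Nat.cast_natAbs]
    push_cast
    rw [mul_sum, ← sum_neg_distrib]
    simp only [mul_neg, mul_comm]
  simp only [hprod]
  refine sum_prod_apply_le_pow (f := fun j : ℤ => exp (-τ) ^ j.natAbs) (fun j => by positivity) (fun t => ?_) S
  exact (sum_le_hasSum t (fun j _ => by positivity)
    (hasSum_pow_natAbs (exp_pos _).le (exp_lt_one_iff.2 (neg_lt_zero.2 hτ)))).trans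
    (one_add_exp_neg_div_one_sub_exp_neg_le hτ)

lemma norm_cexp_I_mul_sum_le {ι : Type*} [Fintype ι] (k : ι → ℤ) {θ : ι → ℂ} {r : ℝ}
    (hθ : ∀ i, |(θ i).im| ≤ r) :
    ‖Complex.exp (Complex.I * ∑ i, (k i : ℂ) * θ i)‖ ≤ exp (r * ((∑ i, |k i| : ℤ) : ℝ)) := by
  rw [Complex.norm_exp, exp_le_exp]
  simp only [Complex.I_mul_re, Complex.im_sum, Complex.mul_im, Complex.intCast_re,
    Complex.intCast_im, zero_mul, add_zero]
  push_cast
  rw [mul_sum, ← sum_neg_distrib]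
  refine sum_le_sum fun i _ => ?_
  calc -((k i : ℝ) * (θ i).im) ≤ |(k i : ℝ)| * |(θ i).im| := by rw [← abs_mul]; exact neg_le_abs _
    _ ≤ r * |(k i : ℝ)| := by rw [mul_comm]; exact mul_le_mul_of_nonneg_right (hθ i) (abs_nonneg _)

theorem norm_tsum_fourier_tail_le {ι : Type*} [Fintype ι] {s σ τ M : ℝ} (K : ℕ)
    {a : (ι → ℤ) → ℂ} (hτ : 0 < τ) (hτσ : τ ≤ σ) (hM : 0 ≤ M)
    (ha : ∀ k : ι → ℤ, ‖a k‖ ≤ M * exp (-((∑ i, |k i| : ℤ) : ℝ) * s))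
    {θ : ι → ℂ} (hθ : ∀ i, |(θ i).im| ≤ s - σ) :
    ‖∑' k : {k : ι → ℤ // (K : ℤ) < ∑ i, |k i|},
        a k.1 * Complex.exp (Complex.I * ∑ i, (k.1 i : ℂ) * θ i)‖
      ≤ M * exp (K * τ) * exp (-(K * σ)) * (1 + 2 / τ) ^ Fintype.card ι := by
  set D := M * exp (K * τ) * exp (-(K * σ))
  refine norm_tsum_le_of_norm_le_of_sum_le
    (g := fun k => D * exp (-(τ * ((∑ i, |k.1 i| : ℤ) : ℝ)))) (fun ⟨k, hk⟩ => ?_) (fun t => ?_)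
  · set L : ℝ := ((∑ i, |k i| : ℤ) : ℝ)
    have hKL : (K : ℝ) ≤ L := by rw [← Int.cast_natCast]; exact Int.cast_le.2 hk.le
    calc ‖a k * Complex.exp (Complex.I * ∑ i, (k i : ℂ) * θ i)‖
        ≤ M * exp (-L * s) * exp ((s - σ) * L) :=
          (norm_mul_le _ _).trans (mul_le_mul (ha k) (norm_cexp_I_mul_sum_le k hθ)
            (norm_nonneg _) ((norm_nonneg _).trans (ha k)))
      _ = M * exp (-(L * σ)) := by rw [mul_assoc, ← exp_add]; ring_nf
      _ ≤ D * exp (-(τ * L)) := by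
          simp only [D, mul_assoc, ← exp_add]
          gcongr
          nlinarith [mul_nonneg (sub_nonneg.2 hKL) (sub_nonneg.2 hτσ)]
  · rw [← mul_sum]
    refine mul_le_mul_of_nonneg_left ?_ (by positivity)
    simpa only [sum_map, Function.Embedding.coe_subtype] using
      sum_exp_neg_mul_sum_abs_le hτ (t.map (Function.Embedding.subtype _))

/-- Truncation estimate: there is c = c(n) such that if the Fourier coefficients of
f satisfy the Cauchy estimate |f_k| ≤ M e^{−|k|s} (M = |f|_s), then for 0 < σ ≤ s
with Kσ ≥ n, the tail f − T_K f is bounded on the strip of width s − σ by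
c K^n e^{−Kσ} M. -/
theorem stmt_2 (n : ℕ) (hn : 1 ≤ n) :
    ∃ c : ℝ, 0 < c ∧
      ∀ (s σ : ℝ) (K : ℕ) (M : ℝ) (a : (Fin n → ℤ) → ℂ),
        0 < s → 0 < σ → σ ≤ s → (n : ℝ) ≤ (K : ℝ) * σ → 0 ≤ M →
        (∀ k : Fin n → ℤ, ‖a k‖ ≤ M * Real.exp (-((∑ i, |k i| : ℤ) : ℝ) * s)) →
        ∀ θ : Fin n → ℂ, (∀ i, |(θ i).im| ≤ s - σ) →
          ‖(∑' k : {k : Fin n → ℤ // (K : ℤ) < ∑ i, |k i|},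
              a k.1 * Complex.exp (Complex.I * ∑ i, (k.1 i : ℂ) * θ i))‖
            ≤ c * (K : ℝ) ^ n * Real.exp (-(K : ℝ) * σ) * M := by
  refine ⟨(3 * exp 1) ^ n, by positivity, fun s σ K M a _ _ _ hKσ hM ha θ hθ => ?_⟩
  have hn' : (1 : ℝ) ≤ n := by exact_mod_cast hn
  have hK : (1 : ℝ) ≤ K := by
    rcases K.eq_zero_or_pos with rfl | hK
    · simp only [Nat.cast_zero, zero_mul] at hKσ; linarith
    · exact_mod_cast hK
  have hτ : 0 < (n : ℝ) / K := by positivity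
  have hτσ : (n : ℝ) / K ≤ σ := by rwa [div_le_iff₀ (by linarith), mul_comm]
  have hKτ : (K : ℝ) * (n / K) = n := by field_simp
  have hbase : 1 + 2 / ((n : ℝ) / K) ≤ 3 * K := by
    rw [div_div_eq_mul_div]
    linarith [div_le_self (by positivity : (0 : ℝ) ≤ 2 * K) hn']
  calc _ ≤ M * exp (K * (n / K)) * exp (-(K * σ)) * (1 + 2 / ((n : ℝ) / K)) ^ n := by
        simpa using norm_tsum_fourier_tail_le K hτ hτσ hM ha hθ
    _ ≤ M * exp 1 ^ n * exp (-(K * σ)) * (3 * K) ^ n := by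
        rw [hKτ, ← exp_nat_mul, mul_one]
        gcongr
    _ = (3 * exp 1) ^ n * K ^ n * exp (-K * σ) * M := by rw [neg_mul]; ring
end

section
/- Suppose ω ∈ ℝⁿ satisfies the Diophantine-type condition |e^{i⟨k, tω⟩} − 1| ≥ tγ/|k|^τ for all nonzero k ∈ ℤⁿ with |k| ≤ K, where t, γ > 0. Let g be analytic and 2π-periodic on the strip of width s with zero mean, and with Fourier coefficients g_k. Then the function ψ(θ) = −Σ_{0<|k|≤K} g_k e^{i⟨k,θ⟩}/(e^{i⟨k,tω⟩} − 1) solves the difference equation ψ(θ + tω) − ψ(θ) + T_K g(θ) = 0, and satisfies the bound |ψ|_{s−σ} ≤ (c₁/(tγ σ^{τ+n})) |g|_s for 0 < σ ≤ min(s,1), with c₁ depending only on τ and n. -/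
/-
The difference equation holds mode by mode: shifting θ by tω multiplies the k-th mode by
e^{i⟨k,tω⟩}, so the k-th term of ψ(θ + tω) − ψ(θ) is exactly g_k e^{i⟨k,θ⟩}.

For the bound, the decay |g_k| ≤ M e^{−|k|s}, the estimate |e^{i⟨k,θ⟩}| ≤ e^{|k|(s−σ)} on the
strip and the Diophantine condition bound the k-th term of ψ by (M/tγ) |k|^τ e^{−|k|σ}. Half of
the exponential absorbs |k|^τ at the cost of (2τ/σ)^τ, since y^τ e^{−y} ≤ τ^τ; the other half
factors over the coordinates, and each one-dimensional sum Σ_j e^{−|j|σ/2} is at most 5/σ.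
-/

open Real Finset

lemma Real.rpow_mul_exp_neg_mul_le {τ a y : ℝ} (hτ : 0 < τ) (ha : 0 < a) (hy : 0 ≤ y) :
    y ^ τ * exp (-(y * a)) ≤ (τ / a) ^ τ := by
  set u := y * a / τ with hu
  have hu0 : 0 ≤ u := by positivity
  have hy_eq : y = τ / a * u := by rw [hu]; field_simp
  have hexp : exp (-(y * a)) = exp (-u) ^ τ := by
    rw [← Real.exp_mul, hu]; congr 1; field_simp
  calc y ^ τ * exp (-(y * a)) = (τ / a) ^ τ * (u * exp (-u)) ^ τ := by
        rw [hexp, hy_eq, mul_rpow (by positivity) hu0, mul_rpow hu0 (exp_pos _).le, mul_assoc]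
    _ ≤ (τ / a) ^ τ * 1 := by
        gcongr
        refine rpow_le_one (by positivity) ?_ hτ.le
        exact (mul_exp_neg_le_exp_neg_one u).trans (exp_le_one_iff.2 (by norm_num))
    _ = (τ / a) ^ τ := mul_one _

lemma Real.rpow_mul_exp_neg_mul_le_mul_exp_neg_half {τ σ N : ℝ} (hτ : 0 < τ) (hσ : 0 < σ)
    (hN : 0 ≤ N) : N ^ τ * exp (-(N * σ)) ≤ (2 * τ / σ) ^ τ * exp (-(N * (σ / 2))) := by
  have hsplit : exp (-(N * σ)) = exp (-(N * (σ / 2))) * exp (-(N * (σ / 2))) := by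
    rw [← exp_add]; ring_nf
  rw [hsplit, ← mul_assoc]
  gcongr
  simpa [div_div_eq_mul_div, mul_comm] using rpow_mul_exp_neg_mul_le hτ (half_pos hσ) hN

lemma Real.sum_Icc_exp_neg_abs_mul_le {x : ℝ} (hx : 0 < x) (K : ℕ) :
    ∑ j ∈ Icc (-K : ℤ) K, exp (-(|(j : ℝ)| * x)) ≤ (2 + x) / x := by
  have heven : Function.Even fun j : ℤ => exp (-(|(j : ℝ)| * x)) := fun j => by simp
  have hgeom : ∑ m ∈ range (K + 1), exp (-(|((m : ℤ) : ℝ)| * x)) ≤ 1 / (1 - exp (-x)) := by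
    have hr : exp (-x) < 1 := exp_lt_one_iff.2 (neg_lt_zero.2 hx)
    simpa [← exp_nat_mul, mul_comm] using
      geom_sum_Ico_le_of_lt_one (m := 0) (n := K + 1) (exp_pos (-x)).le hr
  have hexp : x / (1 + x) ≤ 1 - exp (-x) := by
    have hle : exp (-x) ≤ 1 / (1 + x) := by
      rw [exp_neg, one_div]
      exact inv_anti₀ (by positivity) (by linarith [add_one_le_exp x])
    have hsub : 1 - 1 / (1 + x) = x / (1 + x) := by field_simp; ring
    linarith
  have hinv : 1 / (1 - exp (-x)) ≤ (1 + x) / x := by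
    simpa using one_div_le_one_div_of_le (by positivity) hexp
  rw [sum_Icc_of_even_eq_range heven, nsmul_eq_mul, Int.cast_zero, abs_zero, zero_mul, neg_zero,
    exp_zero]
  calc (2 : ℝ) * ∑ m ∈ range (K + 1), exp (-(|((m : ℤ) : ℝ)| * x)) - 1
      ≤ 2 * ((1 + x) / x) - 1 := by linarith
    _ = (2 + x) / x := by field_simp; ring

section

variable {ι : Type*} [Fintype ι]

lemma abs_le_sum_abs (k : ι → ℤ) (i : ι) : |k i| ≤ ∑ j, |k j| :=
  single_le_sum (f := fun j => |k j|) (fun _ _ => abs_nonneg _) (mem_univ i)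

lemma one_le_sum_abs {k : ι → ℤ} (hk : k ≠ 0) : 1 ≤ ∑ i, |k i| := by
  obtain ⟨i, hi⟩ := Function.ne_iff.1 hk
  exact (Int.one_le_abs hi).trans (abs_le_sum_abs k i)

lemma exp_neg_sum_abs_mul (k : ι → ℤ) (x : ℝ) :
    exp (-(((∑ i, |k i| : ℤ) : ℝ) * x)) = ∏ i, exp (-(|(k i : ℝ)| * x)) := by
  rw [← exp_sum]
  push_cast
  rw [sum_mul, sum_neg_distrib]

lemma sum_exp_neg_sum_abs_mul_le [DecidableEq ι] {p : (ι → ℤ) → Prop} [Fintype (Subtype p)]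
    {K : ℕ} (hp : ∀ k, p k → ∀ i, |k i| ≤ K) {x : ℝ} (hx : 0 < x) :
    ∑ k : Subtype p, exp (-(((∑ i, |k.1 i| : ℤ) : ℝ) * x)) ≤ ((2 + x) / x) ^ Fintype.card ι := by
  simp only [exp_neg_sum_abs_mul]
  have hbox : univ.map (Function.Embedding.subtype p) ⊆ Fintype.piFinset fun _ => Icc (-K : ℤ) K :=
    fun k hk => by
      obtain ⟨k, -, rfl⟩ := mem_map.1 hk
      exact Fintype.mem_piFinset.2 fun i => mem_Icc.2 (abs_le.1 (hp k k.2 i))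
  calc ∑ k : Subtype p, ∏ i, exp (-(|(k.1 i : ℝ)| * x))
      = ∑ k ∈ univ.map (Function.Embedding.subtype p), ∏ i, exp (-(|(k i : ℝ)| * x)) := by
        rw [sum_map]; rfl
    _ ≤ ∑ k ∈ Fintype.piFinset fun _ => Icc (-K : ℤ) K, ∏ i, exp (-(|(k i : ℝ)| * x)) :=
        sum_le_sum_of_subset_of_nonneg hbox fun _ _ _ => by positivity
    _ = ∏ _i : ι, ∑ j ∈ Icc (-K : ℤ) K, exp (-(|(j : ℝ)| * x)) :=
        (prod_univ_sum (fun _ => Icc (-K : ℤ) K) fun _ j => exp (-(|(j : ℝ)| * x))).symm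
    _ ≤ ((2 + x) / x) ^ Fintype.card ι := by
        rw [prod_const, card_univ]
        gcongr
        exact sum_Icc_exp_neg_abs_mul_le hx K

lemma Complex.exp_I_mul_sum_add (k : ι → ℤ) (θ φ : ι → ℂ) :
    exp (I * ∑ i, (k i : ℂ) * (θ + φ) i) =
      exp (I * ∑ i, (k i : ℂ) * θ i) * exp (I * ∑ i, (k i : ℂ) * φ i) := by
  rw [← exp_add, ← mul_add, ← sum_add_distrib]
  simp only [Pi.add_apply, mul_add]

lemma Complex.norm_exp_I_mul_sum_le (k : ι → ℤ) {θ : ι → ℂ} {ρ : ℝ} (hθ : ∀ i, |(θ i).im| ≤ ρ) :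
    ‖exp (I * ∑ i, (k i : ℂ) * θ i)‖ ≤ Real.exp (((∑ i, |k i| : ℤ) : ℝ) * ρ) := by
  rw [norm_exp]
  apply Real.exp_le_exp.2
  have hre : (I * ∑ i, (k i : ℂ) * θ i).re = -∑ i, (k i : ℝ) * (θ i).im := by
    simp [mul_re, im_sum]
  rw [hre]
  push_cast
  rw [sum_mul]
  calc -∑ i, (k i : ℝ) * (θ i).im ≤ ∑ i, |(k i : ℝ) * (θ i).im| :=
        (neg_le_abs _).trans (abs_sum_le_sum_abs _ _)
    _ ≤ ∑ i, |(k i : ℝ)| * ρ := by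
        gcongr with i
        rw [abs_mul]
        exact mul_le_mul_of_nonneg_left (hθ i) (abs_nonneg _)

noncomputable instance [DecidableEq ι] (K : ℕ) :
    Fintype {k : ι → ℤ // k ≠ 0 ∧ ∑ i, |k i| ≤ K} :=
  Fintype.subtype
    ((Fintype.piFinset fun _ => Icc (-K : ℤ) K).filter fun k => k ≠ 0 ∧ ∑ i, |k i| ≤ K)
    fun k => mem_filter.trans <| and_iff_right_of_imp fun hk => Fintype.mem_piFinset.2 fun i =>
      mem_Icc.2 (abs_le.1 ((abs_le_sum_abs k i).trans hk.2))

end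

lemma norm_mul_div_le_of_decay {a e d : ℂ} {M N s σ c τ : ℝ} (hτ : 0 < τ) (hσ : 0 < σ)
    (hc : 0 < c) (hN : 0 < N) (ha : ‖a‖ ≤ M * Real.exp (-N * s))
    (he : ‖e‖ ≤ Real.exp (N * (s - σ))) (hd : c / N ^ τ ≤ ‖d‖) :
    ‖a * e / d‖ ≤ M / c * (2 * τ / σ) ^ τ * Real.exp (-(N * (σ / 2))) := by
  have hM : 0 ≤ M := nonneg_of_mul_nonneg_left ((norm_nonneg a).trans ha) (exp_pos _)
  rw [norm_div, norm_mul]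
  calc ‖a‖ * ‖e‖ / ‖d‖ ≤ M * Real.exp (-N * s) * Real.exp (N * (s - σ)) / (c / N ^ τ) := by
        gcongr
    _ = M / c * (N ^ τ * Real.exp (-(N * σ))) := by
        rw [mul_assoc, ← Real.exp_add, show -N * s + N * (s - σ) = -(N * σ) by ring]
        field_simp
    _ ≤ M / c * ((2 * τ / σ) ^ τ * Real.exp (-(N * (σ / 2)))) :=
        mul_le_mul_of_nonneg_left (rpow_mul_exp_neg_mul_le_mul_exp_neg_half hτ hσ hN.le)
          (div_nonneg hM hc.le)
    _ = M / c * (2 * τ / σ) ^ τ * Real.exp (-(N * (σ / 2))) := by ring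

theorem stmt_3_general (n : ℕ) (τ : ℝ) (hτ : 0 < τ) :
    ∃ c₁ : ℝ, 0 < c₁ ∧
      ∀ (ω : Fin n → ℝ) (t γ s σ M : ℝ) (K : ℕ) (g : (Fin n → ℤ) → ℂ)
        (ψ TKg : (Fin n → ℂ) → ℂ),
        0 < t → 0 < γ → 0 < s → 0 < σ → σ ≤ s → σ ≤ 1 → 1 ≤ K → 0 ≤ M →
        (∀ k : Fin n → ℤ, k ≠ 0 → (∑ i, |k i|) ≤ (K : ℤ) →
          t * γ / ((∑ i, |k i| : ℤ) : ℝ) ^ τ ≤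
            ‖Complex.exp (Complex.I * ∑ i, (k i : ℂ) * (t * ω i : ℝ)) - 1‖) →
        (∀ k : Fin n → ℤ, ‖g k‖ ≤ M * Real.exp (-((∑ i, |k i| : ℤ) : ℝ) * s)) →
        (∀ θ : Fin n → ℂ, ψ θ =
          -∑' k : {k : Fin n → ℤ // k ≠ 0 ∧ (∑ i, |k i|) ≤ (K : ℤ)},
            g k.1 * Complex.exp (Complex.I * ∑ i, (k.1 i : ℂ) * θ i) /
              (Complex.exp (Complex.I * ∑ i, (k.1 i : ℂ) * (t * ω i : ℝ)) - 1)) →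
        (∀ θ : Fin n → ℂ, TKg θ =
          ∑' k : {k : Fin n → ℤ // k ≠ 0 ∧ (∑ i, |k i|) ≤ (K : ℤ)},
            g k.1 * Complex.exp (Complex.I * ∑ i, (k.1 i : ℂ) * θ i)) →
        (∀ θ : Fin n → ℂ,
          ψ (θ + fun i => ((t * ω i : ℝ) : ℂ)) - ψ θ + TKg θ = 0) ∧
        (∀ θ : Fin n → ℂ, (∀ i, |(θ i).im| ≤ s - σ) →
          ‖ψ θ‖ ≤ c₁ / (t * γ * σ ^ (τ + n)) * M) := by
  refine ⟨(2 * τ) ^ τ * 5 ^ n, by positivity, ?_⟩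
  intro ω t γ s σ M K g ψ TKg ht hγ _ hσ _ hσ1 _ _ hDio hg hψ hTKg
  have hN {k : Fin n → ℤ} (hk : k ≠ 0) : (0 : ℝ) < ((∑ i, |k i| : ℤ) : ℝ) := by
    exact_mod_cast one_le_sum_abs hk
  refine ⟨fun θ => ?_, fun θ hθ => ?_⟩
  · simp only [hψ, hTKg, tsum_fintype, Complex.exp_I_mul_sum_add]
    rw [neg_sub_neg, ← sum_sub_distrib, ← sum_add_distrib]
    refine sum_eq_zero fun k _ => ?_
    have hd : Complex.exp (Complex.I * ∑ i, (k.1 i : ℂ) * (t * ω i : ℝ)) - 1 ≠ 0 :=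
      norm_pos_iff.1 <| (div_pos (mul_pos ht hγ) (rpow_pos_of_pos (hN k.2.1) τ)).trans_le
        (hDio k.1 k.2.1 k.2.2)
    field_simp
    ring
  · rw [hψ, tsum_fintype, norm_neg]
    calc _ ≤ ∑ k : {k : Fin n → ℤ // k ≠ 0 ∧ (∑ i, |k i|) ≤ (K : ℤ)},
          M / (t * γ) * (2 * τ / σ) ^ τ * Real.exp (-(((∑ i, |k.1 i| : ℤ) : ℝ) * (σ / 2))) :=
          (norm_sum_le _ _).trans <| sum_le_sum fun k _ =>
            norm_mul_div_le_of_decay hτ hσ (by positivity) (hN k.2.1) (hg k)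
              (Complex.norm_exp_I_mul_sum_le k hθ) (hDio k.1 k.2.1 k.2.2)
      _ = M / (t * γ) * (2 * τ / σ) ^ τ *
          ∑ k : {k : Fin n → ℤ // k ≠ 0 ∧ (∑ i, |k i|) ≤ (K : ℤ)},
            Real.exp (-(((∑ i, |k.1 i| : ℤ) : ℝ) * (σ / 2))) :=
          (mul_sum _ _ _).symm
      _ ≤ M / (t * γ) * (2 * τ / σ) ^ τ * (5 / σ) ^ n := by
          gcongr
          refine (sum_exp_neg_sum_abs_mul_le
            (fun k hk i => (abs_le_sum_abs k i).trans hk.2) (half_pos hσ)).trans ?_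
          rw [Fintype.card_fin]
          refine pow_le_pow_left₀ (by positivity) ?_ n
          rw [div_le_div_iff₀ (half_pos hσ) hσ]
          nlinarith
      _ = (2 * τ) ^ τ * 5 ^ n / (t * γ * σ ^ (τ + n)) * M := by
          rw [div_rpow (by positivity) hσ.le, div_pow, rpow_add hσ, rpow_natCast]
          field_simp

/-- Solution of the homological difference equation: there is c₁ = c₁(τ,n) such that,
under the Diophantine condition |e^{i⟨k,tω⟩} − 1| ≥ tγ/|k|^τ for 0 < |k| ≤ K, the
function ψ(θ) = −Σ_{0<|k|≤K} g_k e^{i⟨k,θ⟩}/(e^{i⟨k,tω⟩} − 1) solves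
ψ(θ+tω) − ψ(θ) + T_K g(θ) = 0 and satisfies |ψ|_{s−σ} ≤ c₁ M/(tγσ^{τ+n}). -/
theorem stmt_3 (n : ℕ) (hn : 1 ≤ n) (τ : ℝ) (hτ : 0 < τ) :
    ∃ c₁ : ℝ, 0 < c₁ ∧
      ∀ (ω : Fin n → ℝ) (t γ s σ M : ℝ) (K : ℕ) (g : (Fin n → ℤ) → ℂ)
        (ψ TKg : (Fin n → ℂ) → ℂ),
        0 < t → 0 < γ → 0 < s → 0 < σ → σ ≤ s → σ ≤ 1 → 1 ≤ K → 0 ≤ M →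
        (∀ k : Fin n → ℤ, k ≠ 0 → (∑ i, |k i|) ≤ (K : ℤ) →
          t * γ / ((∑ i, |k i| : ℤ) : ℝ) ^ τ ≤
            ‖Complex.exp (Complex.I * ∑ i, (k i : ℂ) * (t * ω i : ℝ)) - 1‖) →
        (∀ k : Fin n → ℤ, ‖g k‖ ≤ M * Real.exp (-((∑ i, |k i| : ℤ) : ℝ) * s)) →
        (∀ θ : Fin n → ℂ, ψ θ =
          -∑' k : {k : Fin n → ℤ // k ≠ 0 ∧ (∑ i, |k i|) ≤ (K : ℤ)},
            g k.1 * Complex.exp (Complex.I * ∑ i, (k.1 i : ℂ) * θ i) /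
              (Complex.exp (Complex.I * ∑ i, (k.1 i : ℂ) * (t * ω i : ℝ)) - 1)) →
        (∀ θ : Fin n → ℂ, TKg θ =
          ∑' k : {k : Fin n → ℤ // k ≠ 0 ∧ (∑ i, |k i|) ≤ (K : ℤ)},
            g k.1 * Complex.exp (Complex.I * ∑ i, (k.1 i : ℂ) * θ i)) →
        (∀ θ : Fin n → ℂ,
          ψ (θ + fun i => ((t * ω i : ℝ) : ℂ)) - ψ θ + TKg θ = 0) ∧
        (∀ θ : Fin n → ℂ, (∀ i, |(θ i).im| ≤ s - σ) →
          ‖ψ θ‖ ≤ c₁ / (t * γ * σ ^ (τ + n)) * M) :=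
  stmt_3_general n τ hτ
end
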